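/- (Kick-back Gronwall step) Let (e_n)_{n=0}^N be nonnegative reals, k > 0, t_n = nk ≤ T, and suppose e_n ≤ a + C ∑_{j=1}^{n} k · t_{n-j+1}^{-3/4} e_j for all 1 ≤ n ≤ N, with e_0 ≤ a. If k is small enough that C k^{1/4}·4 < 1/2 (so the j = n term can be absorbed), then there is a constant C' depending only on C and T such that e_n ≤ C' a for all 0 ≤ n ≤ N. -/

import Mathlib

/-!
Weight the errors by `ρ ^ n`, `ρ = 1 + c k`, and let `E` be the largest weighted error
`e n / ρ ^ n`. Once `C ∑ⱼ k t_{n-j+1}^{-3/4} ρ ^ j ≤ (3/4) ρ ^ n`, the recursion at the maximising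
index gives `E ≤ a + (3/4) E`, so `e n ≤ 4 a ρ ^ n ≤ 4 a exp (c T)`.

For the kernel sum let `k ^ (1/4) ≤ δ` and `s = δ ^ 4`. Where `t ≤ s`, concavity of `t ↦ t ^ (1/4)`
bounds `k t^{-3/4}` by the increment of `4 min(t, s) ^ (1/4)` over `[t - k, t]`; these telescope
to at most `4 δ`. Where `t > s` the kernel is at most `δ⁻³`, and the geometric sum gives
`k δ⁻³ ∑ ρ ^ j ≤ (k δ⁻³ + 1 / (c δ³)) ρ ^ n` with `k δ⁻³ ≤ δ`. Taking `δ = 1 / (8C)` and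
`c = 8C / δ³` makes the total `(5/8 + 1/8) ρ ^ n / C`.
-/

open Finset Real

theorem mul_rpow_sub_one_mul_sub_le_rpow_sub_rpow {p x y : ℝ} (hp₀ : 0 ≤ p) (hp₁ : p ≤ 1)
    (hx : 0 < x) (hy : 0 ≤ y) :
    p * x ^ (p - 1) * (x - y) ≤ x ^ p - y ^ p := by
  have hbern := rpow_one_add_le_one_add_mul_self (s := y / x - 1)
    (by linarith [div_nonneg hy hx.le]) hp₀ hp₁
  rw [add_sub_cancel, div_rpow hy hx.le, div_le_iff₀ (rpow_pos_of_pos hx p)] at hbern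
  have hxp : x ^ p * (y / x - 1) = x ^ (p - 1) * (y - x) := by
    rw [rpow_sub_one hx.ne']; field_simp
  nlinarith

theorem le_div_one_sub_mul_pow_of_le_add_sum {N : ℕ} {a ρ θ : ℝ} {e : ℕ → ℝ} {w : ℕ → ℕ → ℝ}
    (hρ : 1 ≤ ρ) (hθ₀ : 0 ≤ θ) (hθ₁ : θ < 1) (ha : 0 ≤ a) (he : ∀ n ≤ N, 0 ≤ e n)
    (hw : ∀ n ≤ N, ∀ j ∈ Icc 1 n, 0 ≤ w n j)
    (hwρ : ∀ n, 1 ≤ n → n ≤ N → ∑ j ∈ Icc 1 n, w n j * ρ ^ j ≤ θ * ρ ^ n)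
    (he₀ : e 0 ≤ a) (hrec : ∀ n, 1 ≤ n → n ≤ N → e n ≤ a + ∑ j ∈ Icc 1 n, w n j * e j) :
    ∀ n ≤ N, e n ≤ a / (1 - θ) * ρ ^ n := by
  have hρ₀ : 0 < ρ := by linarith
  obtain ⟨m, hm, hmax⟩ :=
    (range (N + 1)).exists_max_image (fun n ↦ e n / ρ ^ n) nonempty_range_add_one
  set E := e m / ρ ^ m
  rw [mem_range, Nat.lt_succ_iff] at hm
  have hE : ∀ n ≤ N, e n ≤ E * ρ ^ n := fun n hn ↦
    (div_le_iff₀ (pow_pos hρ₀ n)).1 (hmax n (mem_range.2 (Nat.lt_succ_of_le hn)))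
  have hE₀ : 0 ≤ E := div_nonneg (he m hm) (pow_nonneg hρ₀.le m)
  suffices hEa : E ≤ a + θ * E by
    intro n hn
    have : E ≤ a / (1 - θ) := by rw [le_div_iff₀ (by linarith)]; linarith
    exact (hE n hn).trans (mul_le_mul_of_nonneg_right this (pow_nonneg hρ₀.le n))
  rcases Nat.eq_zero_or_pos m with rfl | hm₁
  · have : E = e 0 := by simp [E]
    nlinarith
  · have hsum : ∑ j ∈ Icc 1 m, w m j * e j ≤ E * (θ * ρ ^ m) := by
      calc ∑ j ∈ Icc 1 m, w m j * e j ≤ ∑ j ∈ Icc 1 m, w m j * (E * ρ ^ j) := by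
            refine sum_le_sum fun j hj ↦ mul_le_mul_of_nonneg_left (hE j ?_) (hw m hm j hj)
            exact (mem_Icc.1 hj).2.trans hm
        _ = E * ∑ j ∈ Icc 1 m, w m j * ρ ^ j := by
          rw [mul_sum]; exact sum_congr rfl fun j _ ↦ by ring
        _ ≤ E * (θ * ρ ^ m) := mul_le_mul_of_nonneg_left (hwρ m hm₁ hm) hE₀
    have hρm : 1 ≤ ρ ^ m := one_le_pow₀ hρ
    have hem : e m = E * ρ ^ m := by simp [E, (pow_pos hρ₀ m).ne']
    have := hrec m hm₁ hm
    nlinarith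

theorem mul_rpow_neg_three_quarters_mul_le {k x s A B : ℝ} (hk : 0 < k) (hkx : k ≤ x) (hs : 0 < s)
    (hA : 0 ≤ A) (hAB : A ≤ B) :
    k * x ^ (-(3 : ℝ) / 4) * A ≤
      4 * (min x s ^ ((1 : ℝ) / 4) - min (x - k) s ^ ((1 : ℝ) / 4)) * B +
        k * s ^ (-(3 : ℝ) / 4) * A := by
  have hx : 0 < x := hk.trans_le hkx
  have hmono : min (x - k) s ^ ((1 : ℝ) / 4) ≤ min x s ^ ((1 : ℝ) / 4) :=
    rpow_le_rpow (le_min (by linarith) hs.le) (min_le_min_right _ (by linarith)) (by norm_num)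
  rcases le_or_gt x s with hxs | hsx
  · have hconc := mul_rpow_sub_one_mul_sub_le_rpow_sub_rpow (p := 1 / 4) (by norm_num) (by norm_num)
      hx (sub_nonneg.2 hkx)
    rw [min_eq_left hxs, min_eq_left (by linarith)] at hmono ⊢
    norm_num at hconc
    have hkernel : k * x ^ (-(3 : ℝ) / 4) ≤ 4 * (x ^ ((1 : ℝ) / 4) - (x - k) ^ ((1 : ℝ) / 4)) := by
      norm_num; linarith
    calc k * x ^ (-(3 : ℝ) / 4) * A
        ≤ 4 * (x ^ ((1 : ℝ) / 4) - (x - k) ^ ((1 : ℝ) / 4)) * B :=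
          mul_le_mul hkernel hAB hA (by linarith)
      _ ≤ _ := le_add_of_nonneg_right (by positivity)
  · have hker : x ^ (-(3 : ℝ) / 4) ≤ s ^ (-(3 : ℝ) / 4) :=
      rpow_le_rpow_of_nonpos hs hsx.le (by norm_num)
    have : 0 ≤ 4 * (min x s ^ ((1 : ℝ) / 4) - min (x - k) s ^ ((1 : ℝ) / 4)) * B :=
      mul_nonneg (by linarith) (hA.trans hAB)
    have : k * x ^ (-(3 : ℝ) / 4) * A ≤ k * s ^ (-(3 : ℝ) / 4) * A := by gcongr
    linarith

theorem one_add_pow_le_exp_mul {x : ℝ} (hx : -1 ≤ x) (n : ℕ) : (1 + x) ^ n ≤ exp (n * x) := by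
  rw [exp_nat_mul]
  gcongr
  · linarith
  · linarith [add_one_le_exp x]

theorem sum_mul_rpow_neg_three_quarters_mul_pow_le {k δ c : ℝ} (hk : 0 < k)
    (hkδ : k ^ ((1 : ℝ) / 4) ≤ δ) (hc : 0 < c) (n : ℕ) :
    ∑ j ∈ Icc 1 n, k * (((n : ℝ) - j + 1) * k) ^ (-(3 : ℝ) / 4) * (1 + c * k) ^ j ≤
      (5 * δ + 1 / (c * δ ^ 3)) * (1 + c * k) ^ n := by
  have hδ : 0 < δ := (rpow_pos_of_pos hk _).trans_le hkδ
  set s := δ ^ 4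
  have hs : 0 < s := by positivity
  have hs₁ : s ^ ((1 : ℝ) / 4) = δ := by
    rw [one_div]; exact_mod_cast pow_rpow_inv_natCast hδ.le (n := 4) (by norm_num)
  have hs₃ : s ^ (-(3 : ℝ) / 4) = (δ ^ 3)⁻¹ := by
    show (δ ^ 4) ^ _ = _
    rw [← rpow_natCast δ 4, ← rpow_mul hδ.le]; norm_num
  have hks : k ≤ s := by
    rw [one_div] at hkδ
    exact_mod_cast (rpow_inv_le_iff_of_pos hk.le hδ.le (by norm_num)).1 hkδ
  set ρ := 1 + c * k
  have hρ : 1 < ρ := by simp only [ρ]; nlinarith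
  set G : ℕ → ℝ := fun j ↦ min (((n : ℝ) - j + 1) * k) s ^ ((1 : ℝ) / 4)
  have hterm : ∀ j ∈ Icc 1 n, k * (((n : ℝ) - j + 1) * k) ^ (-(3 : ℝ) / 4) * ρ ^ j ≤
      4 * (G j - G (j + 1)) * ρ ^ n + k * (δ ^ 3)⁻¹ * ρ ^ j := by
    intro j hj
    have hjn : (j : ℝ) ≤ n := by exact_mod_cast (mem_Icc.1 hj).2
    have hGsucc : G (j + 1) = min (((n : ℝ) - j + 1) * k - k) s ^ ((1 : ℝ) / 4) := by
      simp only [G]; push_cast; ring_nf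
    rw [hGsucc, ← hs₃]
    exact mul_rpow_neg_three_quarters_mul_le hk (by nlinarith) hs (by positivity)
      (pow_le_pow_right₀ hρ.le (mem_Icc.1 hj).2)
  have htelescope : ∑ j ∈ Icc 1 n, (G j - G (j + 1)) ≤ δ := by
    have hsum : ∑ j ∈ Icc 1 n, (G j - G (j + 1)) = G 1 - G (n + 1) := by
      rw [← Ico_add_one_right_eq_Icc, ← neg_sub, ← sum_Ico_sub G (by omega), ← sum_neg_distrib]
      simp only [neg_sub]
    have hG₁ : G 1 ≤ δ := hs₁ ▸
      rpow_le_rpow (le_min (by simp; positivity) hs.le) (min_le_right _ _) (by norm_num)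
    have hGn : G (n + 1) = 0 := by simp [G, hs.le]
    linarith
  have hgeom : ∑ j ∈ Icc 1 n, ρ ^ j ≤ ρ ^ n * ρ / (c * k) := by
    rw [← Ico_add_one_right_eq_Icc, geom_sum_Ico hρ.ne' (by omega), pow_succ,
      show ρ - 1 = c * k by simp [ρ]]
    gcongr
    linarith
  have hkδ' : k * (δ ^ 3)⁻¹ ≤ δ := by
    rw [← div_eq_mul_inv, div_le_iff₀ (by positivity)]; linarith [show δ * δ ^ 3 = s by ring]
  calc _ ≤ ∑ j ∈ Icc 1 n, (4 * (G j - G (j + 1)) * ρ ^ n + k * (δ ^ 3)⁻¹ * ρ ^ j) :=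
        sum_le_sum hterm
    _ = 4 * ρ ^ n * ∑ j ∈ Icc 1 n, (G j - G (j + 1)) + k * (δ ^ 3)⁻¹ * ∑ j ∈ Icc 1 n, ρ ^ j := by
        rw [sum_add_distrib, mul_sum, mul_sum]; congr 1; exact sum_congr rfl fun j _ ↦ by ring
    _ ≤ 4 * ρ ^ n * δ + k * (δ ^ 3)⁻¹ * (ρ ^ n * ρ / (c * k)) := by gcongr
    _ = (4 * δ + k * (δ ^ 3)⁻¹ + 1 / (c * δ ^ 3)) * ρ ^ n := by
        simp only [ρ]; field_simp; ring
    _ ≤ _ := by gcongr; linarith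

theorem stmt_18_general (C T : ℝ) (hC : 0 < C) :
    ∃ C' : ℝ, 0 < C' ∧
      ∀ (N : ℕ) (k a : ℝ) (e : ℕ → ℝ),
        0 < k → (N : ℝ) * k ≤ T → 0 ≤ a →
        (∀ n ≤ N, 0 ≤ e n) → e 0 ≤ a →
        (∀ n, 1 ≤ n → n ≤ N →
          e n ≤ a + C * ∑ j ∈ Finset.Icc 1 n,
            k * (((n : ℝ) - (j : ℝ) + 1) * k) ^ (-(3 : ℝ) / 4) * e j) →
        C * k ^ ((1 : ℝ) / 4) * 4 < 1 / 2 →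
        ∀ n ≤ N, e n ≤ C' * a := by
  set c : ℝ := 8 * C * (8 * C) ^ 3
  have hc : 0 < c := by positivity
  refine ⟨4 * exp (c * T), by positivity, ?_⟩
  intro N k a e hk hNk ha he he₀ hrec hsmall n hn
  have hkδ : k ^ ((1 : ℝ) / 4) ≤ (8 * C)⁻¹ := by
    rw [← one_div, le_div_iff₀ (by positivity)]; linarith
  have hkernel : ∀ n, 1 ≤ n → n ≤ N → ∑ j ∈ Icc 1 n,
      C * (k * (((n : ℝ) - j + 1) * k) ^ (-(3 : ℝ) / 4)) * (1 + c * k) ^ j ≤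
        3 / 4 * (1 + c * k) ^ n := fun n _ _ ↦
    calc _ = C * ∑ j ∈ Icc 1 n, k * (((n : ℝ) - j + 1) * k) ^ (-(3 : ℝ) / 4) * (1 + c * k) ^ j := by
          rw [mul_sum]; exact sum_congr rfl fun j _ ↦ by ring
      _ ≤ C * ((5 * (8 * C)⁻¹ + 1 / (c * (8 * C)⁻¹ ^ 3)) * (1 + c * k) ^ n) :=
          mul_le_mul_of_nonneg_left (sum_mul_rpow_neg_three_quarters_mul_pow_le hk hkδ hc n) hC.le
      _ = 3 / 4 * (1 + c * k) ^ n := by simp only [c]; field_simp; ring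
  have hkernel_nonneg : ∀ n ≤ N, ∀ j ∈ Icc 1 n,
      0 ≤ C * (k * (((n : ℝ) - j + 1) * k) ^ (-(3 : ℝ) / 4)) := fun n _ j hj ↦ by
    have : (j : ℝ) ≤ n := by exact_mod_cast (mem_Icc.1 hj).2
    exact mul_nonneg hC.le (mul_nonneg hk.le (rpow_nonneg (mul_nonneg (by linarith) hk.le) _))
  have hpow : (1 + c * k) ^ n ≤ exp (c * T) :=
    (one_add_pow_le_exp_mul (by nlinarith) n).trans
      (exp_le_exp.2 (by nlinarith [show (n : ℝ) * k ≤ N * k by gcongr]))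
  calc e n ≤ a / (1 - 3 / 4) * (1 + c * k) ^ n :=
        le_div_one_sub_mul_pow_of_le_add_sum (by nlinarith) (by norm_num) (by norm_num) ha he
          hkernel_nonneg hkernel he₀
          (fun n h₁ h₂ ↦ by simpa only [mul_sum, mul_assoc] using hrec n h₁ h₂) n hn
    _ = 4 * a * (1 + c * k) ^ n := by ring
    _ ≤ 4 * exp (c * T) * a := by nlinarith [mul_le_mul_of_nonneg_left hpow ha]

theorem stmt_18 (C T : ℝ) (hC : 0 < C) (hT : 0 < T) :
    ∃ C' : ℝ, 0 < C' ∧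
      ∀ (N : ℕ) (k a : ℝ) (e : ℕ → ℝ),
        0 < k → (N : ℝ) * k ≤ T → 0 ≤ a →
        (∀ n ≤ N, 0 ≤ e n) → e 0 ≤ a →
        (∀ n, 1 ≤ n → n ≤ N →
          e n ≤ a + C * ∑ j ∈ Finset.Icc 1 n,
            k * (((n : ℝ) - (j : ℝ) + 1) * k) ^ (-(3 : ℝ) / 4) * e j) →
        C * k ^ ((1 : ℝ) / 4) * 4 < 1 / 2 →
        ∀ n ≤ N, e n ≤ C' * a :=
  stmt_18_general C T hC
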